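/- Let t ≥ 0, let v be a non-root vertex of a perfect binary tree, and let u be a child of v. If u is weakly t-stable and ξ_{t+1}(v) = ξ_t(u), then v is weakly (t+1)-stable. -/
import Mathlib


open SimpleGraph Set

variable {V : Type*}

/-- The majority-dynamics process generated by the initial opinion vector `σ`:
`ξ (t+1) v` is the sign of the sum of the opinions `ξ t` over the neighbours of `v`. -/
noncomputable def dyn (G : SimpleGraph V) (σ : V → ℤ) : ℕ → V → ℤ
  | 0 => σ
  | t + 1 => fun v => if 0 < ∑ᶠ u ∈ G.neighborSet v, dyn G σ t u then 1 else -1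

/-- `σ` is a valid vector of opinions, i.e. takes values in `{-1, 1}`. -/
def PM (σ : V → ℤ) : Prop := ∀ v, σ v = 1 ∨ σ v = -1

/-- The degree of a vertex. -/
noncomputable def degree' (G : SimpleGraph V) (v : V) : ℕ := (G.neighborSet v).ncard

/-- A leaf is a vertex of degree 1. -/
def IsLeaf (G : SimpleGraph V) (v : V) : Prop := degree' G v = 1

/-- The number of neighbours of `v` that are leaves. -/
noncomputable def leafNbrs (G : SimpleGraph V) (v : V) : ℕ := {u | G.Adj v u ∧ IsLeaf G u}.ncard

/-- All degrees of `G` are odd. -/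
def OddDegrees (G : SimpleGraph V) : Prop := ∀ v, Odd (degree' G v)

/-- `v` is `t`-stable for the process `ξ`. -/
def Stable (ξ : ℕ → V → ℤ) (v : V) (t : ℕ) : Prop :=
  ∀ s, t ≤ s → s % 2 = t % 2 → ξ (s + 2) v = ξ s v

/-- `G` is a perfect `k`-ary tree of height `h` rooted at `R`. -/
noncomputable def IsPerfectKAry (G : SimpleGraph V) (R : V) (k h : ℕ) : Prop :=
  G.IsTree ∧ (∀ v, degree' G v = 1 ∨ degree' G v = k + 1) ∧
    (∀ v, degree' G v = 1 → G.dist R v = h) ∧ degree' G R = k + 1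

/-- The set of descendants of `v` (including `v`) in the tree rooted at `R`:
those vertices `u` such that `v` lies on the (unique) geodesic from `R` to `u`. -/
noncomputable def desc (G : SimpleGraph V) (R v : V) : Set V :=
  {u | G.dist R u = G.dist R v + G.dist v u}

/-- `p` is the parent of `c` in the tree rooted at `R`. -/
noncomputable def IsParent (G : SimpleGraph V) (R p c : V) : Prop :=
  G.Adj p c ∧ G.dist R p + 1 = G.dist R c

/-- `v` is weakly `t`-stable for the process `ξ` (in the tree rooted at `R`): there is a
vector of initial opinions agreeing with `ξ t` on the subtree of descendants of `v` for
which `v` is 0-stable. -/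
noncomputable def WeaklyStable (G : SimpleGraph V) (R : V) (ξ : ℕ → V → ℤ) (v : V)
    (t : ℕ) : Prop :=
  ∃ σ' : V → ℤ, PM σ' ∧ (∀ w ∈ desc G R v, σ' w = ξ t w) ∧
    ∀ s, s % 2 = 0 → dyn G σ' (s + 2) v = dyn G σ' s v

section AuxLemmas

variable {G : SimpleGraph V}

private lemma path_unique' (hT : G.IsAcyclic) {a b : V} {P Q : G.Walk a b}
    (hP : P.IsPath) (hQ : Q.IsPath) : P = Q :=
  congrArg Subtype.val (SimpleGraph.isAcyclic_iff_path_unique.mp hT ⟨P, hP⟩ ⟨Q, hQ⟩)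

private lemma dist_add_dist_le_length {a b y : V} (P : G.Walk a b) (hy : y ∈ P.support) :
    G.dist a y + G.dist y b ≤ P.length := by
  classical
  have hspec := P.take_spec hy
  have hlen : (P.takeUntil y hy).length + (P.dropUntil y hy).length = P.length := by
    conv_rhs => rw [← hspec]
    rw [SimpleGraph.Walk.length_append]
  calc G.dist a y + G.dist y b
      ≤ (P.takeUntil y hy).length + (P.dropUntil y hy).length :=
        Nat.add_le_add (SimpleGraph.dist_le _) (SimpleGraph.dist_le _)
    _ = P.length := hlen

private lemma adj_dist_le (hconn : G.Connected) {a b : V} (hab : G.Adj a b) (R : V) :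
    G.dist R b ≤ G.dist R a + 1 := by
  obtain ⟨P, _, hlen⟩ := hconn.exists_path_of_dist R a
  have h := SimpleGraph.dist_le (P.concat hab)
  rwa [SimpleGraph.Walk.length_concat, hlen] at h

private lemma parent_exists (hconn : G.Connected) {a R : V} (ha : a ≠ R) :
    ∃ q, G.Adj q a ∧ G.dist R q + 1 = G.dist R a := by
  obtain ⟨P, _, hlen⟩ := hconn.exists_path_of_dist R a
  obtain ⟨q, haq, W, hW⟩ := SimpleGraph.Walk.exists_eq_cons_of_ne ha P.reverse
  have hWlen : W.length + 1 = G.dist R a := by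
    have hl := congrArg SimpleGraph.Walk.length hW
    rw [SimpleGraph.Walk.length_reverse, hlen, SimpleGraph.Walk.length_cons] at hl
    omega
  have h1 : G.dist R q ≤ W.length := by
    have h := SimpleGraph.dist_le W.reverse
    rwa [SimpleGraph.Walk.length_reverse] at h
  have h2 : G.dist R a ≤ G.dist R q + 1 := adj_dist_le hconn haq.symm R
  exact ⟨q, haq.symm, by omega⟩

private lemma adj_dist_cases (hT : G.IsTree) {a b : V} (hab : G.Adj a b) (R : V) :
    G.dist R a + 1 = G.dist R b ∨ G.dist R b + 1 = G.dist R a := by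
  classical
  have hconn := hT.isConnected
  have h1 := adj_dist_le hconn hab R
  have h2 := adj_dist_le hconn hab.symm R
  rcases Nat.lt_trichotomy (G.dist R a) (G.dist R b) with hlt | heq | hgt
  · left; omega
  · exfalso
    obtain ⟨P, hP, hlen⟩ := hconn.exists_path_of_dist R a
    by_cases hb : b ∈ P.support
    · have h3 := dist_add_dist_le_length P hb
      have h4 : G.dist b a ≠ 0 := by
        rw [SimpleGraph.dist_ne_zero_iff_ne_and_reachable]
        exact ⟨hab.ne.symm, hab.symm.reachable⟩
      omega
    · obtain ⟨Q, hQ, hQlen⟩ := hconn.exists_path_of_dist R b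
      have hQa : (SimpleGraph.Walk.cons hab.symm P.reverse).IsPath := by
        rw [SimpleGraph.Walk.cons_isPath_iff]
        exact ⟨hP.reverse, by rwa [SimpleGraph.Walk.support_reverse, List.mem_reverse]⟩
      have heqw := path_unique' hT.IsAcyclic hQa hQ.reverse
      have hlen2 := congrArg SimpleGraph.Walk.length heqw
      rw [SimpleGraph.Walk.length_cons, SimpleGraph.Walk.length_reverse,
        SimpleGraph.Walk.length_reverse, hlen, hQlen] at hlen2
      omega
  · right; omega

private lemma parent_unique (hT : G.IsTree) {R w a b : V}
    (ha : G.Adj a w) (hda : G.dist R a + 1 = G.dist R w)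
    (hb : G.Adj b w) (hdb : G.dist R b + 1 = G.dist R w) : a = b := by
  classical
  have hconn := hT.isConnected
  obtain ⟨Pa, hPa, hla⟩ := hconn.exists_path_of_dist R a
  obtain ⟨Pb, hPb, hlb⟩ := hconn.exists_path_of_dist R b
  have hwa : w ∉ Pa.support := by
    intro hmem
    have h3 := dist_add_dist_le_length Pa hmem
    omega
  have hwb : w ∉ Pb.support := by
    intro hmem
    have h3 := dist_add_dist_le_length Pb hmem
    omega
  have hQa : (SimpleGraph.Walk.cons ha.symm Pa.reverse).IsPath := by
    rw [SimpleGraph.Walk.cons_isPath_iff]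
    exact ⟨hPa.reverse, by rwa [SimpleGraph.Walk.support_reverse, List.mem_reverse]⟩
  have hQb : (SimpleGraph.Walk.cons hb.symm Pb.reverse).IsPath := by
    rw [SimpleGraph.Walk.cons_isPath_iff]
    exact ⟨hPb.reverse, by rwa [SimpleGraph.Walk.support_reverse, List.mem_reverse]⟩
  have heqw := path_unique' hT.IsAcyclic hQa hQb
  have hsup := congrArg SimpleGraph.Walk.support heqw
  rw [SimpleGraph.Walk.support_cons, SimpleGraph.Walk.support_cons,
    SimpleGraph.Walk.support_eq_cons Pa.reverse, SimpleGraph.Walk.support_eq_cons Pb.reverse]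
      at hsup
  injection hsup with _ hsup2
  injection hsup2

/-- The neighbourhood of `w` as a `Finset`. -/
noncomputable def nbr (G : SimpleGraph V) [Fintype V] (w : V) : Finset V :=
  (Set.toFinite (G.neighborSet w)).toFinset

lemma mem_nbr [Fintype V] {w y : V} : y ∈ nbr G w ↔ G.Adj w y := by
  simp [nbr, Set.Finite.mem_toFinset, SimpleGraph.mem_neighborSet]

lemma degree'_eq_card [Fintype V] (G : SimpleGraph V) (w : V) :
    degree' G w = (nbr G w).card :=
  Set.ncard_eq_toFinset_card _ _

lemma dyn_zero (G : SimpleGraph V) (τ : V → ℤ) : dyn G τ 0 = τ := rfl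

lemma dyn_succ [Fintype V] (G : SimpleGraph V) (τ : V → ℤ) (s : ℕ) (w : V) :
    dyn G τ (s + 1) w = if 0 < ∑ y ∈ nbr G w, dyn G τ s y then 1 else -1 := by
  show (if 0 < ∑ᶠ y ∈ G.neighborSet w, dyn G τ s y then (1 : ℤ) else -1) = _
  rw [← (Set.toFinite (G.neighborSet w)).coe_toFinset, finsum_mem_coe_finset]
  rfl

lemma dyn_pm_succ [Fintype V] (G : SimpleGraph V) (τ : V → ℤ) (s : ℕ) (w : V) :
    dyn G τ (s + 1) w = 1 ∨ dyn G τ (s + 1) w = -1 := by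
  rw [dyn_succ]; split <;> simp

lemma pm_dyn [Fintype V] (G : SimpleGraph V) {τ : V → ℤ} (hτ : PM τ) (s : ℕ) :
    PM (dyn G τ s) := by
  cases s with
  | zero => exact hτ
  | succ n => exact fun w => dyn_pm_succ G τ n w

lemma dyn_shift (G : SimpleGraph V) (τ : V → ℤ) : ∀ s, dyn G (dyn G τ 1) s = dyn G τ (s + 1) := by
  intro s
  induction s with
  | zero => rfl
  | succ n ih =>
    show (fun w => if 0 < ∑ᶠ y ∈ G.neighborSet w, dyn G (dyn G τ 1) n y then (1 : ℤ) else -1)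
      = (fun w => if 0 < ∑ᶠ y ∈ G.neighborSet w, dyn G τ (n + 1) y then (1 : ℤ) else -1)
    rw [ih]

private lemma mono_step [Fintype V] (G : SimpleGraph V) {c : ℤ} (hc : c = 1 ∨ c = -1)
    (A B : V → ℤ) (w : V)
    (hAB : ∀ y ∈ nbr G w, (A y = 1 ∨ A y = -1) ∧ (B y = 1 ∨ B y = -1) ∧ (A y = c → B y = c))
    (hA : (if 0 < ∑ y ∈ nbr G w, A y then (1 : ℤ) else -1) = c) :
    (if 0 < ∑ y ∈ nbr G w, B y then (1 : ℤ) else -1) = c := by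
  rcases hc with rfl | rfl
  · have hsum : ∑ y ∈ nbr G w, A y ≤ ∑ y ∈ nbr G w, B y := by
      refine Finset.sum_le_sum fun y hy => ?_
      obtain ⟨h1, h2, h3⟩ := hAB y hy
      rcases h1 with h | h
      · rw [h, h3 h]
      · rcases h2 with h' | h' <;> omega
    split at hA
    case isTrue hpos => rw [if_pos (lt_of_lt_of_le hpos hsum)]
    case isFalse => exact absurd hA (by norm_num)
  · have hsum : ∑ y ∈ nbr G w, B y ≤ ∑ y ∈ nbr G w, A y := by
      refine Finset.sum_le_sum fun y hy => ?_
      obtain ⟨h1, h2, h3⟩ := hAB y hy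
      rcases h1 with h | h
      · rcases h2 with h' | h' <;> omega
      · rw [h, h3 h]
    split at hA
    case isTrue => exact absurd hA (by norm_num)
    case isFalse hneg => exact if_neg fun hcon => hneg (lt_of_lt_of_le hcon hsum)

private lemma sum_triple [DecidableEq V] (f : V → ℤ) {a b c : V}
    (hab : a ≠ b) (hac : a ≠ c) (hbc : b ≠ c) :
    ∑ y ∈ ({a, b, c} : Finset V), f y = f a + f b + f c := by
  rw [Finset.sum_insert (by simp [hab, hac]), Finset.sum_insert (by simp [hbc]),
    Finset.sum_singleton, add_assoc]

private lemma finset_three [DecidableEq V] {s : Finset V} (h3 : s.card = 3) {a b : V}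
    (ha : a ∈ s) (hb : b ∈ s) (hab : a ≠ b) :
    ∃ c, a ≠ c ∧ b ≠ c ∧ s = {a, b, c} := by
  have hb' : b ∈ s.erase a := Finset.mem_erase.2 ⟨hab.symm, hb⟩
  have h1 : ((s.erase a).erase b).card = 1 := by
    rw [Finset.card_erase_of_mem hb', Finset.card_erase_of_mem ha, h3]
  obtain ⟨c, hc⟩ := Finset.card_eq_one.1 h1
  have hcmem : c ∈ (s.erase a).erase b := hc ▸ Finset.mem_singleton_self c
  obtain ⟨hcb, hcmem2⟩ := Finset.mem_erase.1 hcmem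
  obtain ⟨hca, hcs⟩ := Finset.mem_erase.1 hcmem2
  refine ⟨c, hca.symm, hcb.symm, ?_⟩
  apply Finset.ext
  intro x
  simp only [Finset.mem_insert, Finset.mem_singleton]
  constructor
  · intro hx
    by_cases hxa : x = a
    · exact Or.inl hxa
    by_cases hxb : x = b
    · exact Or.inr (Or.inl hxb)
    have : x ∈ (s.erase a).erase b := Finset.mem_erase.2 ⟨hxb, Finset.mem_erase.2 ⟨hxa, hx⟩⟩
    rw [hc, Finset.mem_singleton] at this
    exact Or.inr (Or.inr this)
  · rintro (rfl | rfl | rfl) <;> assumption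

end AuxLemmas

/-- If `u` is a child of a non-root vertex `v` of a perfect binary tree,
`u` is weakly `t`-stable and `ξ_{t+1}(v) = ξ_t(u)`, then `v` is weakly
`(t+1)`-stable. -/
theorem weak_rising [Fintype V] (G : SimpleGraph V) (R : V) (h : ℕ) (hh : 1 ≤ h)
    (hperf : IsPerfectKAry G R 2 h) (v u : V) (hv : v ≠ R)
    (h1 : IsParent G R v u)
    (σ : V → ℤ) (hσ : PM σ) (t : ℕ)
    (hws : WeaklyStable G R (dyn G σ) u t)
    (hop : dyn G σ (t + 1) v = dyn G σ t u) :
    WeaklyStable G R (dyn G σ) v (t + 1) := by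
  classical
  obtain ⟨hT, hdeg, hleaf, hdegR⟩ := hperf
  have hconn : G.Connected := hT.isConnected
  obtain ⟨σ', hσ'PM, hσ'eq, hσ'stab⟩ := hws
  have hadj_vu : G.Adj v u := h1.1
  have hdvu : G.dist R v + 1 = G.dist R u := h1.2
  set c : ℤ := dyn G σ (t + 1) v with hcdef
  have hcpm : c = 1 ∨ c = -1 := dyn_pm_succ G σ t v
  have hcu : dyn G σ t u = c := hop.symm
  -- the parent of `v`
  obtain ⟨p, hadj_pv, hdpv⟩ := parent_exists hconn hv
  have hdist_vu : G.dist v u = 1 := SimpleGraph.dist_eq_one_iff_adj.2 hadj_vu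
  have hu_mem_Dv : u ∈ desc G R v := by
    simp only [desc, Set.mem_setOf_eq, hdist_vu]; omega
  have hv_mem_Dv : v ∈ desc G R v := by
    simp only [desc, Set.mem_setOf_eq, SimpleGraph.dist_self]
    omega
  have hu_mem_Du : u ∈ desc G R u := by
    simp only [desc, Set.mem_setOf_eq, SimpleGraph.dist_self]
    omega
  have hp_not_Dv : p ∉ desc G R v := by
    simp only [desc, Set.mem_setOf_eq]
    intro hcon; omega
  have hDu_sub_Dv : desc G R u ⊆ desc G R v := by
    intro w hw
    simp only [desc, Set.mem_setOf_eq] at hw ⊢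
    have t1 : G.dist v w ≤ G.dist v u + G.dist u w := hconn.dist_triangle
    have t2 : G.dist R w ≤ G.dist R v + G.dist v w := hconn.dist_triangle
    omega
  -- the boundary lemma: the only edge leaving `desc G R w` is the edge to the parent
  have hbound : ∀ (w q : V), G.Adj q w → G.dist R q + 1 = G.dist R w →
      ∀ a b, G.Adj a b → a ∈ desc G R w → b ∉ desc G R w → a = w ∧ b = q := by
    intro w q hqw hdqw a b hab haw hbw
    simp only [desc, Set.mem_setOf_eq] at haw hbw
    have t1 : G.dist w b ≤ G.dist w a + 1 := adj_dist_le hconn hab w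
    have t2 : G.dist R b ≤ G.dist R w + G.dist w b := hconn.dist_triangle
    rcases adj_dist_cases hT hab R with hc1 | hc2
    · exfalso; apply hbw; omega
    · by_cases haw' : a = w
      · subst haw'
        exact ⟨rfl, parent_unique hT hab.symm hc2 hqw hdqw⟩
      · exfalso
        have haw_ne : a ≠ w := haw'
        obtain ⟨b', hb'a, hdwb'⟩ := parent_exists hconn (R := w) haw_ne
        have h5 : G.dist R b' ≤ G.dist R w + G.dist w b' := hconn.dist_triangle
        have h6 : G.dist R a ≤ G.dist R b' + 1 := adj_dist_le hconn hb'a R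
        have h7 : G.dist R b' + 1 = G.dist R a := by omega
        have hbb' : b = b' := parent_unique hT hab.symm hc2 hb'a h7
        apply hbw
        rw [hbb']
        omega
  have hbound_v := hbound v p hadj_pv hdpv
  have hbound_u := hbound u v hadj_vu hdvu
  -- the neighbourhood of `v` is `{p, u, u'}`
  have hp_ne_u : p ≠ u := by intro he; rw [he] at hdpv; omega
  have hp_mem : p ∈ nbr G v := mem_nbr.2 hadj_pv.symm
  have hu_mem : u ∈ nbr G v := mem_nbr.2 hadj_vu
  have hdegv : (nbr G v).card = 3 := by
    rcases hdeg v with hd | hd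
    · rw [degree'_eq_card] at hd
      have h2 := Finset.one_lt_card.2 ⟨p, hp_mem, u, hu_mem, hp_ne_u⟩
      omega
    · rw [degree'_eq_card] at hd; exact hd
  obtain ⟨u', hpu', huu', hnbrv⟩ := finset_three hdegv hp_mem hu_mem hp_ne_u
  have hu'_mem : u' ∈ nbr G v := by rw [hnbrv]; simp
  have hadj_vu' : G.Adj v u' := mem_nbr.1 hu'_mem
  have hu'_mem_Dv : u' ∈ desc G R v := by
    by_contra hno
    exact hpu' ((hbound_v v u' hadj_vu' hv_mem_Dv hno).2).symm
  -- the neighbourhood of `p` is `{v, q1, q2}` with `q1, q2 ∉ desc G R v`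
  have hv_mem_p : v ∈ nbr G p := mem_nbr.2 hadj_pv
  have hdegp : (nbr G p).card = 3 := by
    by_cases hpR : p = R
    · rw [← degree'_eq_card]; rw [hpR]; exact hdegR
    · obtain ⟨r, hadj_rp, hdrp⟩ := parent_exists hconn hpR
      have hr_ne_v : r ≠ v := by intro he; rw [he] at hdrp; omega
      have hr_mem : r ∈ nbr G p := mem_nbr.2 hadj_rp.symm
      rcases hdeg p with hd | hd
      · rw [degree'_eq_card] at hd
        have h2 := Finset.one_lt_card.2 ⟨r, hr_mem, v, hv_mem_p, hr_ne_v⟩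
        omega
      · rw [degree'_eq_card] at hd; exact hd
  have h2card : ((nbr G p).erase v).card = 2 := by
    rw [Finset.card_erase_of_mem hv_mem_p, hdegp]
  obtain ⟨q1, q2, hq12, herase⟩ := Finset.card_eq_two.1 h2card
  have hq1mem : q1 ∈ (nbr G p).erase v := by rw [herase]; simp
  have hq2mem : q2 ∈ (nbr G p).erase v := by rw [herase]; simp
  have hq1v : q1 ≠ v := (Finset.mem_erase.1 hq1mem).1
  have hq2v : q2 ≠ v := (Finset.mem_erase.1 hq2mem).1
  have hq1p : G.Adj p q1 := mem_nbr.1 (Finset.mem_erase.1 hq1mem).2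
  have hq2p : G.Adj p q2 := mem_nbr.1 (Finset.mem_erase.1 hq2mem).2
  have hnbrp : nbr G p = {v, q1, q2} := by
    rw [show ({v, q1, q2} : Finset V) = insert v {q1, q2} from rfl, ← herase,
      Finset.insert_erase hv_mem_p]
  have hq1_not : q1 ∉ desc G R v := by
    intro hmem
    exact hq1v (hbound_v q1 p hq1p.symm hmem hp_not_Dv).1
  have hq2_not : q2 ∉ desc G R v := by
    intro hmem
    exact hq2v (hbound_v q2 p hq2p.symm hmem hp_not_Dv).1
  -- the auxiliary process
  set z0 : V → ℤ := fun w => if w ∈ desc G R v then dyn G σ t w else c with hz0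
  have hz0_in : ∀ w ∈ desc G R v, z0 w = dyn G σ t w := fun w hw => if_pos hw
  have hz0_out : ∀ w ∉ desc G R v, z0 w = c := fun w hw => if_neg hw
  have hz0pm : PM z0 := by
    intro w
    by_cases hw : w ∈ desc G R v
    · rw [hz0_in w hw]; exact pm_dyn G hσ t w
    · rw [hz0_out w hw]; exact hcpm
  -- outside `desc G R v` the auxiliary process is frozen at `c`
  have hfrozen : ∀ s, ∀ w, w ∉ desc G R v → dyn G z0 s w = c := by
    intro s
    induction s with
    | zero => exact fun w hw => hz0_out w hw
    | succ n ih =>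
      intro w hw
      rw [dyn_succ]
      by_cases hwp : w = p
      · subst hwp
        rw [hnbrp, sum_triple _ hq1v.symm hq2v.symm hq12, ih q1 hq1_not, ih q2 hq2_not]
        have hx := pm_dyn G hz0pm n v
        rcases hcpm with hc1 | hc1 <;> rcases hx with hx1 | hx1 <;>
          rw [hc1, hx1] <;> norm_num
      · have hall : ∀ y ∈ nbr G w, dyn G z0 n y = c := by
          intro y hy
          refine ih y fun hyD => hwp ?_
          exact (hbound_v y w (mem_nbr.1 hy).symm hyD hw).2
        rw [Finset.sum_congr rfl hall, Finset.sum_const]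
        have hcardpos : 0 < (nbr G w).card := by
          rcases hdeg w with hd | hd <;> rw [degree'_eq_card] at hd <;> omega
        rcases hcpm with hc1 | hc1 <;> rw [hc1] <;>
          simp only [smul_eq_mul, mul_one, mul_neg_one, nsmul_eq_mul]
        · rw [if_pos (by exact_mod_cast hcardpos)]
        · rw [if_neg (by omega)]
  -- the witnessing initial configuration
  set σ'' : V → ℤ := fun w => if w ∈ desc G R v then dyn G σ (t + 1) w else c with hσ''def
  have hσ''_in : ∀ w ∈ desc G R v, σ'' w = dyn G σ (t + 1) w := fun w hw => if_pos hw
  have hσ''_out : ∀ w ∉ desc G R v, σ'' w = c := fun w hw => if_neg hw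
  -- `σ''` is the one-step evolution of `z0`
  have hbridge0 : σ'' = dyn G z0 1 := by
    funext w
    by_cases hwD : w ∈ desc G R v
    · by_cases hwv : w = v
      · rw [hwv]
        rw [hσ''_in v hv_mem_Dv, ← hcdef, dyn_succ, hnbrv,
          sum_triple _ hp_ne_u hpu' huu', dyn_zero, hz0_out p hp_not_Dv,
          hz0_in u hu_mem_Dv, hcu, hz0_in u' hu'_mem_Dv]
        have hx := pm_dyn G hσ t u'
        rcases hcpm with hc1 | hc1 <;> rcases hx with hx1 | hx1 <;>
          rw [hc1, hx1] <;> norm_num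
      · rw [hσ''_in w hwD, dyn_succ, dyn_succ, dyn_zero]
        have hsum : ∑ y ∈ nbr G w, z0 y = ∑ y ∈ nbr G w, dyn G σ t y := by
          refine Finset.sum_congr rfl fun y hy => ?_
          refine hz0_in y ?_
          by_contra hyD
          exact hwv (hbound_v w y (mem_nbr.1 hy) hwD hyD).1
        rw [hsum]
    · rw [hσ''_out w hwD, (hfrozen 1 w hwD).symm]
  have hshift : ∀ s, dyn G σ'' s = dyn G z0 (s + 1) := by
    intro s
    rw [hbridge0]
    exact dyn_shift G z0 s
  -- stability of `u` under `σ'` at even times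
  have hρu : ∀ k, dyn G σ' (2 * k) u = c := by
    intro k
    induction k with
    | zero => rw [show 2 * 0 = 0 from rfl, dyn_zero, hσ'eq u hu_mem_Du, hcu]
    | succ n ih =>
      have hstep := hσ'stab (2 * n) (by omega)
      rw [show 2 * (n + 1) = 2 * n + 2 by ring, hstep, ih]
  have hρu' : ∀ s, s % 2 = 0 → dyn G σ' s u = c := by
    intro s hs
    rw [show s = 2 * (s / 2) by omega]
    exact hρu _
  -- the key invariant
  have hKEY : ∀ s, (∀ w ∈ desc G R u, (G.dist R w + s) % 2 = G.dist R u % 2 →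
      dyn G σ' s w = c → dyn G z0 s w = c) ∧ (s % 2 = 1 → dyn G z0 s v = c) := by
    intro s
    induction s with
    | zero =>
      refine ⟨fun w hw _ hρ => ?_, by omega⟩
      rw [dyn_zero, hz0_in w (hDu_sub_Dv hw), ← hσ'eq w hw]
      rw [dyn_zero] at hρ
      exact hρ
    | succ n ih =>
      obtain ⟨ihINV, ihAUX⟩ := ih
      constructor
      · intro w hw hpar hρ
        rw [dyn_succ] at hρ ⊢
        refine mono_step G hcpm (dyn G σ' n) (dyn G z0 n) w ?_ hρ
        intro y hy
        refine ⟨pm_dyn G hσ'PM n y, pm_dyn G hz0pm n y, ?_⟩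
        have hadj_wy : G.Adj w y := mem_nbr.1 hy
        by_cases hyDu : y ∈ desc G R u
        · intro hA
          refine ihINV y hyDu ?_ hA
          rcases adj_dist_cases hT hadj_wy R with hcc | hcc <;> omega
        · obtain ⟨hwu, hyv⟩ := hbound_u w y hadj_wy hw hyDu
          subst hwu; subst hyv
          intro _
          exact ihAUX (by omega)
      · intro hs1
        rw [dyn_succ, hnbrv, sum_triple _ hp_ne_u hpu' huu', hfrozen n p hp_not_Dv]
        have h_u : dyn G z0 n u = c := ihINV u hu_mem_Du (by omega) (hρu' n (by omega))
        rw [h_u]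
        have hx := pm_dyn G hz0pm n u'
        rcases hcpm with hc1 | hc1 <;> rcases hx with hx1 | hx1 <;>
          rw [hc1, hx1] <;> norm_num
  -- assemble the witness
  refine ⟨σ'', ?_, ?_, ?_⟩
  · intro w
    by_cases hwD : w ∈ desc G R v
    · rw [hσ''_in w hwD]; exact dyn_pm_succ G σ t w
    · rw [hσ''_out w hwD]; exact hcpm
  · intro w hw
    exact hσ''_in w hw
  · intro s hs
    have e1 := congrFun (hshift (s + 2)) v
    have e2 := congrFun (hshift s) v
    rw [e1, e2, (hKEY (s + 2 + 1)).2 (by omega), (hKEY (s + 1)).2 (by omega)]
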